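/- arXiv:2410.15538 — 2 statements merged into one kernel-verified Lean document; each statement's English description precedes it below -/
import Mathlib

section
/- Let F be a field of characteristic ≠ 2 and T, S strictly lower triangular n×n matrices over F. An n×n matrix Γ = [γ_{ij}] defines (via X_j ↦ Σ_i γ_{ij} Y_i) an isomorphism of F-algebras A(T) → A(S) if and only if Γ is invertible and its entries satisfy: 2 γ_{ir} γ_{kr} + γ_{kr}² s_{ki} = Σ_{j<r} t_{rj} (γ_{kj} γ_{kr} s_{ki} + γ_{kj} γ_{ir} + γ_{ij} γ_{kr}) for all 1 ≤ r ≤ n and 1 ≤ i < k ≤ n. -/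
open scoped BigOperators

noncomputable section

variable {F : Type} [Field F]

/-- `T` is strictly lower triangular. -/
def SLT {n : ℕ} (T : Matrix (Fin n) (Fin n) F) : Prop :=
  ∀ i j : Fin n, i ≤ j → T i j = 0

/-- The ideal of relations defining the nil graded algebra `A(T)`:
`X i ^ 2 = ∑ j < i, T i j * X j * X i` (for `i = 0` the sum is empty, giving `X 0 ^ 2 = 0`). -/
def ntIdeal {n : ℕ} (T : Matrix (Fin n) (Fin n) F) : Ideal (MvPolynomial (Fin n) F) :=
  Ideal.span {p | ∃ i : Fin n,
    p = MvPolynomial.X i ^ 2 -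
      ∑ j ∈ Finset.univ.filter (fun j => j < i),
        MvPolynomial.C (T i j) * MvPolynomial.X j * MvPolynomial.X i}

/-- The nil graded algebra `A(T)` associated to the strictly lower triangular matrix `T`. -/
abbrev NTAlg {n : ℕ} (T : Matrix (Fin n) (Fin n) F) : Type :=
  MvPolynomial (Fin n) F ⧸ ntIdeal T

/-- The generator `X i` of `A(T)`. -/
def ntGen {n : ℕ} (T : Matrix (Fin n) (Fin n) F) (i : Fin n) : NTAlg T :=
  Ideal.Quotient.mk (ntIdeal T) (MvPolynomial.X i)

/-- There is a degree-preserving isomorphism `A(T) → A(S)`, i.e. an algebra isomorphism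
sending each generator to an `F`-linear combination of the generators of the target. -/
def NTIso {n : ℕ} (T S : Matrix (Fin n) (Fin n) F) : Prop :=
  ∃ e : NTAlg T ≃ₐ[F] NTAlg S, ∃ Γ : Matrix (Fin n) (Fin n) F,
    ∀ j : Fin n, e (ntGen T j) = ∑ i : Fin n, Γ i j • ntGen S i

/-!
Write `Y` for the generators of `A(S)`. The defining ideal of `A(T)` is generated by `n` linearly
independent quadratic forms `ntRel T r`; since they are homogeneous of degree two, the ideal has
no element of degree one and its degree-two elements are exactly their span. Consequently the
generators of `A(T)` are linearly independent, and in degree two the products `Y i * Y k`,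
`i < k`, are linearly independent in `A(S)`.

The substitution `X r ↦ ∑ i, Γ i r • Y i` sends `ntRel T r` to `∑ i < k, c r i k • Y i * Y k`,
where `c r i k` is the difference of the two sides of the fundamental equation. So it induces a
map `A(T) → A(S)` exactly when the fundamental equations hold, and `Γ` is invertible whenever that
map is injective. Conversely, for invertible `Γ` the substitution is an automorphism of the
polynomial ring; it maps the `n`-dimensional span of the relations of `A(T)` injectively into
the `n`-dimensional span of the relations of `A(S)`, hence onto it, and therefore carries the
ideal of `A(T)` onto that of `A(S)`.
-/

open MvPolynomial Finset Matrix

theorem Finset.sum_sum_eq_sum_sum_lt_add_sum_diag {ι M : Type*} [LinearOrder ι] [Fintype ι]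
    [AddCommMonoid M] (f : ι → ι → M) :
    ∑ i, ∑ k, f i k = ∑ k, ∑ i ∈ univ.filter (· < k), (f i k + f k i) + ∑ k, f k k := by
  have split (i k : ι) : f i k = (if i < k then f i k else 0) + (if k < i then f i k else 0)
      + (if i = k then f i k else 0) := by
    rcases lt_trichotomy i k with h | rfl | h
    · simp [h, h.not_gt, h.ne]
    · simp
    · simp [h, h.not_gt, h.ne']
  have lower : ∑ k, ∑ i ∈ univ.filter (· < k), f i k = ∑ i, ∑ k, if i < k then f i k else 0 := by
    simp_rw [sum_filter]
    exact sum_comm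
  have upper : ∑ k, ∑ i ∈ univ.filter (· < k), f k i = ∑ i, ∑ k, if k < i then f i k else 0 := by
    simp_rw [sum_filter]
  have diag : ∑ k, f k k = ∑ i, ∑ k, if i = k then f i k else 0 := by
    simp
  rw [sum_congr rfl fun k _ => sum_add_distrib, sum_add_distrib, lower, upper, diag,
    ← sum_add_distrib, ← sum_add_distrib]
  simp_rw [← sum_add_distrib, ← split]

theorem Matrix.sum_smul_sum_smul_eq_sum_mulVec_smul {ι R M : Type*} [Fintype ι] [CommSemiring R]
    [AddCommMonoid M] [Module R M] (A : Matrix ι ι R) (v : ι → R) (y : ι → M) :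
    ∑ r, v r • ∑ i, A i r • y i = ∑ i, (A *ᵥ v) i • y i := by
  simp_rw [smul_sum, smul_smul, mulVec, dotProduct, sum_smul]
  rw [sum_comm]
  simp_rw [mul_comm]

theorem Finsupp.single_add_single_ne_single_two {ι : Type*} {i k : ι} (r : ι) (hik : i ≠ k) :
    Finsupp.single i 1 + Finsupp.single k 1 ≠ Finsupp.single r 2 := by
  classical
  intro h
  have := DFunLike.congr_fun h i
  rw [Finsupp.add_apply, Finsupp.single_eq_same, Finsupp.single_apply, Finsupp.single_apply,
    if_neg hik.symm] at this
  split_ifs at this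
  omega

theorem Finsupp.single_add_single_eq_single_add_single_iff_of_lt {ι : Type*} [LinearOrder ι]
    {i k i' k' : ι} (hik : i < k) (hik' : i' < k') :
    Finsupp.single i 1 + Finsupp.single k 1 = Finsupp.single i' 1 + Finsupp.single k' 1 ↔
      i = i' ∧ k = k' := by
  refine ⟨fun h => ?_, fun ⟨hi, hk⟩ => hi ▸ hk ▸ rfl⟩
  rcases (Finsupp.single_add_single_eq_single_add_single one_ne_zero one_ne_zero).mp h with
    h | ⟨-, rfl, rfl⟩ | ⟨h, -⟩
  · exact h
  · exact absurd (hik.trans hik') (lt_irrefl _)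
  · exact absurd h two_ne_zero

namespace MvPolynomial

theorem coeff_X_mul_X {σ R : Type*} [DecidableEq σ] [CommSemiring R] (m : σ →₀ ℕ) (i k : σ) :
    coeff m (X i * X k : MvPolynomial σ R) =
      if Finsupp.single i 1 + Finsupp.single k 1 = m then 1 else 0 := by
  rw [X, X, monomial_mul, one_mul, coeff_monomial]

section Homogeneous

variable {σ R : Type*} [CommSemiring R]

attribute [local instance] MvPolynomial.gradedAlgebra in
theorem homogeneousComponent_mul_of_isHomogeneous {p q : MvPolynomial σ R} {d : ℕ}
    (hq : q.IsHomogeneous d) (m : ℕ) :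
    homogeneousComponent m (p * q) =
      if d ≤ m then homogeneousComponent (m - d) p * q else 0 := by
  simpa [← decomposition.decompose'_apply] using
    DirectSum.coe_decompose_mul_of_right_mem (homogeneousSubmodule σ R) m (a := p) hq

variable {ι : Type*} [Fintype ι] {g : ι → MvPolynomial σ R} {d : ℕ} {p : MvPolynomial σ R}

theorem homogeneousComponent_eq_sum_of_mem_span (hg : ∀ i, (g i).IsHomogeneous d)
    (hp : p ∈ Ideal.span (Set.range g)) :
    ∃ q : ι → MvPolynomial σ R, ∀ m, homogeneousComponent m p =
      if d ≤ m then ∑ i, homogeneousComponent (m - d) (q i) * g i else 0 := by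
  obtain ⟨q, rfl⟩ := Ideal.mem_span_range_iff_exists_fun.mp hp
  refine ⟨q, fun m => ?_⟩
  simp_rw [map_sum, homogeneousComponent_mul_of_isHomogeneous (hg _)]
  split_ifs <;> simp

theorem homogeneousComponent_eq_zero_of_mem_span (hg : ∀ i, (g i).IsHomogeneous d)
    (hp : p ∈ Ideal.span (Set.range g)) {m : ℕ} (hm : m < d) :
    homogeneousComponent m p = 0 := by
  obtain ⟨q, hq⟩ := homogeneousComponent_eq_sum_of_mem_span hg hp
  rw [hq, if_neg hm.not_ge]

theorem homogeneousComponent_mem_span_of_mem_span (hg : ∀ i, (g i).IsHomogeneous d)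
    (hp : p ∈ Ideal.span (Set.range g)) :
    homogeneousComponent d p ∈ Submodule.span R (Set.range g) := by
  obtain ⟨q, hq⟩ := homogeneousComponent_eq_sum_of_mem_span hg hp
  rw [hq, if_pos le_rfl, Nat.sub_self]
  refine Submodule.sum_mem _ fun i _ => ?_
  rw [homogeneousComponent_zero, ← smul_eq_C_mul]
  exact Submodule.smul_mem _ _ (Submodule.subset_span ⟨i, rfl⟩)

end Homogeneous

section LinearSubst

variable {σ R : Type*} [Fintype σ] [CommSemiring R]

def linearSubst (A : Matrix σ σ R) : MvPolynomial σ R →ₐ[R] MvPolynomial σ R :=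
  aeval fun r => ∑ i, A i r • X i

@[simp]
theorem linearSubst_X (A : Matrix σ σ R) (r : σ) : linearSubst A (X r) = ∑ i, A i r • X i :=
  aeval_X _ _

theorem linearSubst_comp_linearSubst (A B : Matrix σ σ R) :
    (linearSubst B).comp (linearSubst A) = linearSubst (B * A) := by
  refine algHom_ext fun r => ?_
  simp only [AlgHom.comp_apply, linearSubst_X, map_sum, map_smul,
    sum_smul_sum_smul_eq_sum_mulVec_smul]
  simp [mulVec, dotProduct, Matrix.mul_apply]

theorem isHomogeneous_sum_smul_X (c : σ → R) :
    (∑ i, c i • X i : MvPolynomial σ R).IsHomogeneous 1 :=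
  Submodule.sum_mem (homogeneousSubmodule σ R 1) fun i _ =>
    Submodule.smul_mem _ _ (isHomogeneous_X R i)

theorem IsHomogeneous.linearSubst {p : MvPolynomial σ R} {m : ℕ} (hp : p.IsHomogeneous m)
    (A : Matrix σ σ R) : (linearSubst A p).IsHomogeneous m := by
  rw [← one_mul m]
  exact hp.aeval _ fun r => isHomogeneous_sum_smul_X _

variable [DecidableEq σ]

theorem linearSubst_one : linearSubst (1 : Matrix σ σ R) = AlgHom.id R _ :=
  algHom_ext fun r => by simp [one_apply, ite_smul]

def linearSubstEquiv {K : Type*} [CommRing K] (A : Matrix σ σ K) (hA : IsUnit A) :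
    MvPolynomial σ K ≃ₐ[K] MvPolynomial σ K :=
  have hdet := (isUnit_iff_isUnit_det A).mp hA
  AlgEquiv.ofAlgHom (linearSubst A) (linearSubst A⁻¹)
    (by rw [linearSubst_comp_linearSubst, mul_nonsing_inv _ hdet, linearSubst_one])
    (by rw [linearSubst_comp_linearSubst, nonsing_inv_mul _ hdet, linearSubst_one])

end LinearSubst

end MvPolynomial

variable {n : ℕ}

def ntRel (T : Matrix (Fin n) (Fin n) F) (r : Fin n) : MvPolynomial (Fin n) F :=
  X r ^ 2 - ∑ j ∈ univ.filter (· < r), C (T r j) * X j * X r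

theorem ntIdeal_eq_span_range_ntRel (T : Matrix (Fin n) (Fin n) F) :
    ntIdeal T = Ideal.span (Set.range (ntRel T)) := by
  rw [ntIdeal]
  congr 1
  ext p
  exact exists_congr fun i => eq_comm

theorem ntRel_mem_ntIdeal (T : Matrix (Fin n) (Fin n) F) (r : Fin n) : ntRel T r ∈ ntIdeal T :=
  ntIdeal_eq_span_range_ntRel T ▸ Ideal.subset_span ⟨r, rfl⟩

theorem isHomogeneous_ntRel (T : Matrix (Fin n) (Fin n) F) (r : Fin n) :
    (ntRel T r).IsHomogeneous 2 := by
  refine (isHomogeneous_X_pow r 2).sub (IsHomogeneous.sum _ _ _ fun j _ => ?_)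
  simpa using ((isHomogeneous_C _ (T r j)).mul (isHomogeneous_X F j)).mul (isHomogeneous_X F r)

theorem coeff_single_two_ntRel (T : Matrix (Fin n) (Fin n) F) (r r' : Fin n) :
    coeff (Finsupp.single r 2) (ntRel T r') = if r' = r then 1 else 0 := by
  have hmixed : ∀ j ∈ univ.filter (· < r'),
      coeff (Finsupp.single r 2) (C (T r' j) * X j * X r') = 0 := fun j hj => by
    rw [mul_assoc, coeff_C_mul, coeff_X_mul_X,
      if_neg (Finsupp.single_add_single_ne_single_two r (mem_filter.mp hj).2.ne), mul_zero]
  rw [ntRel, coeff_sub, coeff_sum, sum_eq_zero hmixed, sub_zero, X_pow_eq_monomial,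
    coeff_monomial]
  simp [Finsupp.single_left_inj two_ne_zero, eq_comm]

theorem linearIndependent_ntRel (T : Matrix (Fin n) (Fin n) F) :
    LinearIndependent F (ntRel T) := by
  refine Fintype.linearIndependent_iff.mpr fun l hl r => ?_
  simpa [coeff_sum, coeff_single_two_ntRel] using congr_arg (coeff (Finsupp.single r 2)) hl

theorem mem_span_ntRel_of_mem_ntIdeal {T : Matrix (Fin n) (Fin n) F}
    {p : MvPolynomial (Fin n) F} (hp : p ∈ ntIdeal T) (hhom : p.IsHomogeneous 2) :
    p ∈ Submodule.span F (Set.range (ntRel T)) := by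
  rw [← homogeneousComponent_eq_self hhom]
  exact homogeneousComponent_mem_span_of_mem_span (isHomogeneous_ntRel T)
    (ntIdeal_eq_span_range_ntRel T ▸ hp)

theorem aeval_ntGen (T : Matrix (Fin n) (Fin n) F) :
    aeval (ntGen T) = Ideal.Quotient.mkₐ F (ntIdeal T) :=
  algHom_ext fun _ => aeval_X _ _

theorem ntGen_sq (T : Matrix (Fin n) (Fin n) F) (k : Fin n) :
    ntGen T k ^ 2 = ∑ i ∈ univ.filter (· < k), T k i • (ntGen T i * ntGen T k) := by
  have h : aeval (ntGen T) (ntRel T k) = 0 := by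
    rw [aeval_ntGen]
    exact Ideal.Quotient.eq_zero_iff_mem.mpr (ntRel_mem_ntIdeal T k)
  simpa only [ntRel, map_sub, map_pow, map_sum, map_mul, aeval_C, aeval_X, mul_assoc,
    ← Algebra.smul_def, sub_eq_zero] using h

theorem linearIndependent_ntGen (T : Matrix (Fin n) (Fin n) F) :
    LinearIndependent F (ntGen T) := by
  refine Fintype.linearIndependent_iff.mpr fun c hc => ?_
  have hmem : ∑ i, c i • X i ∈ ntIdeal T := by
    rw [← Ideal.Quotient.eq_zero_iff_mem, ← Ideal.Quotient.mkₐ_eq_mk F, ← aeval_ntGen]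
    simpa using hc
  have hzero : ∑ i, c i • X i = (0 : MvPolynomial (Fin n) F) := by
    rw [← homogeneousComponent_eq_self (isHomogeneous_sum_smul_X c)]
    exact homogeneousComponent_eq_zero_of_mem_span (isHomogeneous_ntRel T)
      (ntIdeal_eq_span_range_ntRel T ▸ hmem) one_lt_two
  exact Fintype.linearIndependent_iff.mp (linearIndependent_X (Fin n) F) c hzero

theorem eq_zero_of_sum_smul_ntGen_mul_ntGen_eq_zero (S : Matrix (Fin n) (Fin n) F)
    (c : Fin n → Fin n → F)
    (hc : ∑ k, ∑ i ∈ univ.filter (· < k), c i k • (ntGen S i * ntGen S k) = 0)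
    {i k : Fin n} (hik : i < k) : c i k = 0 := by
  set p : MvPolynomial (Fin n) F := ∑ k, ∑ i ∈ univ.filter (· < k), c i k • (X i * X k)
  have hmem : p ∈ ntIdeal S := by
    rw [← Ideal.Quotient.eq_zero_iff_mem, ← Ideal.Quotient.mkₐ_eq_mk F, ← aeval_ntGen]
    simpa [p] using hc
  have hhom : p.IsHomogeneous 2 :=
    IsHomogeneous.sum _ _ _ fun k _ => IsHomogeneous.sum _ _ _ fun i _ => by
      rw [smul_eq_C_mul]
      exact ((isHomogeneous_X F i).mul (isHomogeneous_X F k)).C_mul _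
  obtain ⟨l, hl⟩ :=
    (Submodule.mem_span_range_iff_exists_fun F).mp (mem_span_ntRel_of_mem_ntIdeal hmem hhom)
  -- `p` has no square monomials, while `ntRel S r` is the only relation containing `X r ^ 2`.
  have hsq (r : Fin n) : coeff (Finsupp.single r 2) p = 0 := by
    simp only [p, coeff_sum, coeff_smul, coeff_X_mul_X]
    refine sum_eq_zero fun k _ => sum_eq_zero fun i hi => ?_
    rw [if_neg (Finsupp.single_add_single_ne_single_two r (mem_filter.mp hi).2.ne), smul_zero]
  have hl0 (r : Fin n) : l r = 0 := by
    simpa [← hl, coeff_sum, coeff_single_two_ntRel] using hsq r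
  have hp0 : p = 0 := by simp [← hl, hl0]
  have hcoeff : coeff (Finsupp.single i 1 + Finsupp.single k 1) p = c i k := by
    simp only [p, coeff_sum, coeff_smul, coeff_X_mul_X, smul_eq_mul, mul_ite, mul_one, mul_zero]
    rw [sum_eq_single k, sum_eq_single i]
    · simp
    · intro i' hi' hne
      refine if_neg ?_
      rw [Finsupp.single_add_single_eq_single_add_single_iff_of_lt (mem_filter.mp hi').2 hik]
      exact fun h => hne h.1
    · simp [hik]
    · intro k' _ hne
      refine sum_eq_zero fun i' hi' => if_neg ?_
      rw [Finsupp.single_add_single_eq_single_add_single_iff_of_lt (mem_filter.mp hi').2 hik]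
      exact fun h => hne h.2
    · simp
  rw [← hcoeff, hp0, coeff_zero]

theorem sum_smul_mul_sum_smul_of_sq_eq {A : Type*} [CommRing A] [Algebra F A]
    (S : Matrix (Fin n) (Fin n) F) {y : Fin n → A}
    (hy : ∀ k, y k ^ 2 = ∑ i ∈ univ.filter (· < k), S k i • (y i * y k)) (u v : Fin n → F) :
    (∑ i, u i • y i) * (∑ i, v i • y i) =
      ∑ k, ∑ i ∈ univ.filter (· < k),
        (u i * v k + u k * v i + u k * v k * S k i) • (y i * y k) := by
  have diag (k : Fin n) : (u k * v k) • (y k * y k) =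
      ∑ i ∈ univ.filter (· < k), (u k * v k * S k i) • (y i * y k) := by
    rw [← sq, hy, smul_sum]
    simp_rw [smul_smul]
  simp_rw [sum_mul_sum, smul_mul_smul_comm]
  rw [sum_sum_eq_sum_sum_lt_add_sum_diag]
  simp_rw [diag, ← sum_add_distrib, mul_comm (y _) (y _), add_smul]

def fundamentalCoeff (T S Γ : Matrix (Fin n) (Fin n) F) (r i k : Fin n) : F :=
  2 * Γ i r * Γ k r + Γ k r ^ 2 * S k i -
    ∑ j ∈ univ.filter (· < r), T r j * (Γ k j * Γ k r * S k i + Γ k j * Γ i r + Γ i j * Γ k r)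

theorem aeval_ntRel {A : Type*} [CommRing A] [Algebra F A] (S : Matrix (Fin n) (Fin n) F)
    {y : Fin n → A} (hy : ∀ k, y k ^ 2 = ∑ i ∈ univ.filter (· < k), S k i • (y i * y k))
    (T Γ : Matrix (Fin n) (Fin n) F) (r : Fin n) :
    aeval (fun r => ∑ i, Γ i r • y i) (ntRel T r) =
      ∑ k, ∑ i ∈ univ.filter (· < k), fundamentalCoeff T S Γ r i k • (y i * y k) := by
  simp only [ntRel, map_sub, map_pow, map_sum, map_mul, aeval_C, aeval_X, ← Algebra.smul_def]
  simp_rw [sq, smul_mul_assoc, sum_smul_mul_sum_smul_of_sq_eq S hy, smul_sum, smul_smul]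
  rw [sum_comm (s := univ.filter (· < r)), ← sum_sub_distrib]
  refine sum_congr rfl fun k _ => ?_
  rw [sum_comm, ← sum_sub_distrib]
  refine sum_congr rfl fun i _ => ?_
  rw [← sum_smul, ← sub_smul, fundamentalCoeff]
  congr 2
  · ring
  · exact sum_congr rfl fun j _ => by ring

theorem mkₐ_comp_linearSubst (S Γ : Matrix (Fin n) (Fin n) F) :
    (Ideal.Quotient.mkₐ F (ntIdeal S)).comp (linearSubst Γ) =
      aeval fun r => ∑ i, Γ i r • ntGen S i :=
  algHom_ext fun r => by simp [← aeval_ntGen]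

theorem linearSubst_ntRel_mem_ntIdeal_iff (T S Γ : Matrix (Fin n) (Fin n) F) (r : Fin n) :
    linearSubst Γ (ntRel T r) ∈ ntIdeal S ↔ ∀ i k, i < k → fundamentalCoeff T S Γ r i k = 0 := by
  have hmk : Ideal.Quotient.mk (ntIdeal S) (linearSubst Γ (ntRel T r)) =
      ∑ k, ∑ i ∈ univ.filter (· < k), fundamentalCoeff T S Γ r i k • (ntGen S i * ntGen S k) := by
    rw [← Ideal.Quotient.mkₐ_eq_mk F, ← AlgHom.comp_apply, mkₐ_comp_linearSubst,
      aeval_ntRel S (ntGen_sq S)]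
  rw [← Ideal.Quotient.eq_zero_iff_mem, hmk]
  refine ⟨fun h i k hik => eq_zero_of_sum_smul_ntGen_mul_ntGen_eq_zero S _ h hik,
    fun h => sum_eq_zero fun k _ => sum_eq_zero fun i hi => ?_⟩
  rw [h i k (mem_filter.mp hi).2, zero_smul]

theorem map_ntIdeal_linearSubst {T S Γ : Matrix (Fin n) (Fin n) F} (hΓ : IsUnit Γ)
    (h : ∀ r, linearSubst Γ (ntRel T r) ∈ ntIdeal S) :
    (ntIdeal T).map (linearSubst Γ) = ntIdeal S := by
  refine le_antisymm ?_ ?_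
  · rw [ntIdeal_eq_span_range_ntRel T, Ideal.map_span, Ideal.span_le]
    rintro _ ⟨_, ⟨r, rfl⟩, rfl⟩
    exact h r
  set W := Submodule.span F (Set.range (linearSubst Γ ∘ ntRel T))
  have hWle : W ≤ Submodule.span F (Set.range (ntRel S)) :=
    Submodule.span_le.mpr <| Set.range_subset_iff.mpr fun r =>
      mem_span_ntRel_of_mem_ntIdeal (h r) ((isHomogeneous_ntRel T r).linearSubst Γ)
  have hli : LinearIndependent F (linearSubst Γ ∘ ntRel T) :=
    (linearIndependent_ntRel T).map' (linearSubst Γ).toLinearMap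
      (LinearMap.ker_eq_bot.mpr (linearSubstEquiv Γ hΓ).injective)
  have := FiniteDimensional.span_of_finite F (Set.finite_range (ntRel S))
  have hW : W = Submodule.span F (Set.range (ntRel S)) :=
    Submodule.eq_of_le_of_finrank_eq hWle <| by
      rw [finrank_span_eq_card hli, finrank_span_eq_card (linearIndependent_ntRel S)]
  have hWmap : W ≤ ((ntIdeal T).map (linearSubst Γ)).restrictScalars F :=
    Submodule.span_le.mpr <| Set.range_subset_iff.mpr fun r =>
      Ideal.mem_map_of_mem _ (ntRel_mem_ntIdeal T r)
  rw [ntIdeal_eq_span_range_ntRel S, Ideal.span_le]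
  rintro _ ⟨r, rfl⟩
  exact hWmap (hW ▸ Submodule.subset_span ⟨r, rfl⟩)

theorem exists_algEquiv_of_isUnit {T S Γ : Matrix (Fin n) (Fin n) F} (hΓ : IsUnit Γ)
    (h : ∀ r, linearSubst Γ (ntRel T r) ∈ ntIdeal S) :
    ∃ e : NTAlg T ≃ₐ[F] NTAlg S, ∀ r, e (ntGen T r) = ∑ i, Γ i r • ntGen S i := by
  refine ⟨Ideal.quotientEquivAlg _ _ (linearSubstEquiv Γ hΓ) (map_ntIdeal_linearSubst hΓ h).symm,
    fun r => ?_⟩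
  change Ideal.Quotient.mkₐ F (ntIdeal S) (linearSubst Γ (X r)) = _
  rw [← AlgHom.comp_apply, mkₐ_comp_linearSubst, aeval_X]

theorem isUnit_of_algEquiv {T S Γ : Matrix (Fin n) (Fin n) F} (e : NTAlg T ≃ₐ[F] NTAlg S)
    (he : ∀ r, e (ntGen T r) = ∑ i, Γ i r • ntGen S i) : IsUnit Γ := by
  refine mulVec_injective_iff_isUnit.mp fun v w hvw => funext fun r => ?_
  have he_sum (v : Fin n → F) : e (∑ r, v r • ntGen T r) = ∑ i, (Γ *ᵥ v) i • ntGen S i := by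
    simp only [map_sum, map_smul, he, sum_smul_sum_smul_eq_sum_mulVec_smul]
  refine Fintype.linearIndependent_iffₛ.mp (linearIndependent_ntGen T) v w ?_ r
  exact e.injective (by rw [he_sum, he_sum, hvw])

theorem linearSubst_mem_ntIdeal_of_algEquiv {T S Γ : Matrix (Fin n) (Fin n) F}
    (e : NTAlg T ≃ₐ[F] NTAlg S) (he : ∀ r, e (ntGen T r) = ∑ i, Γ i r • ntGen S i)
    {p : MvPolynomial (Fin n) F} (hp : p ∈ ntIdeal T) : linearSubst Γ p ∈ ntIdeal S := by
  have hcomm : (Ideal.Quotient.mkₐ F (ntIdeal S)).comp (linearSubst Γ) =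
      (e : NTAlg T →ₐ[F] NTAlg S).comp (Ideal.Quotient.mkₐ F (ntIdeal T)) := by
    rw [mkₐ_comp_linearSubst, ← aeval_ntGen]
    exact algHom_ext fun r => by simp [he]
  rw [← Ideal.Quotient.eq_zero_iff_mem, ← Ideal.Quotient.mkₐ_eq_mk F, ← AlgHom.comp_apply, hcomm,
    AlgHom.comp_apply, Ideal.Quotient.mkₐ_eq_mk, Ideal.Quotient.eq_zero_iff_mem.mpr hp, map_zero]

theorem stmt3_general {n : ℕ}
    (T S : Matrix (Fin n) (Fin n) F)
    (Γ : Matrix (Fin n) (Fin n) F) :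
    (∃ e : NTAlg T ≃ₐ[F] NTAlg S,
      ∀ r : Fin n, e (ntGen T r) = ∑ i : Fin n, Γ i r • ntGen S i) ↔
    (IsUnit Γ ∧
      ∀ (r : Fin n) (i k : Fin n), i < k →
        2 * Γ i r * Γ k r + Γ k r ^ 2 * S k i =
          ∑ j ∈ Finset.univ.filter (fun j => j < r),
            T r j * (Γ k j * Γ k r * S k i + Γ k j * Γ i r + Γ i j * Γ k r)) := by
  constructor
  · rintro ⟨e, he⟩
    refine ⟨isUnit_of_algEquiv e he, fun r i k hik => sub_eq_zero.mp ?_⟩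
    exact (linearSubst_ntRel_mem_ntIdeal_iff T S Γ r).mp
      (linearSubst_mem_ntIdeal_of_algEquiv e he (ntRel_mem_ntIdeal T r)) i k hik
  · rintro ⟨hΓ, h⟩
    exact exists_algEquiv_of_isUnit hΓ fun r =>
      (linearSubst_ntRel_mem_ntIdeal_iff T S Γ r).mpr fun i k hik => sub_eq_zero.mpr (h r i k hik)

/-- The assignment `X j ↦ ∑ i, Γ i j • Y i` defines an isomorphism `A(T) → A(S)` iff
`Γ` is invertible and its entries satisfy the fundamental quadratic equations. -/
theorem stmt3 {n : ℕ} (h2 : (2 : F) ≠ 0)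
    (T S : Matrix (Fin n) (Fin n) F) (hT : SLT T) (hS : SLT S)
    (Γ : Matrix (Fin n) (Fin n) F) :
    (∃ e : NTAlg T ≃ₐ[F] NTAlg S,
      ∀ r : Fin n, e (ntGen T r) = ∑ i : Fin n, Γ i r • ntGen S i) ↔
    (IsUnit Γ ∧
      ∀ (r : Fin n) (i k : Fin n), i < k →
        2 * Γ i r * Γ k r + Γ k r ^ 2 * S k i =
          ∑ j ∈ Finset.univ.filter (fun j => j < r),
            T r j * (Γ k j * Γ k r * S k i + Γ k j * Γ i r + Γ i j * Γ k r)) :=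
  stmt3_general T S Γ
end
end

section
/- Let F be a field of characteristic ≠ 2. For any t, s ∈ F, the F-algebras A(T) and A(S), where T is the 2×2 strictly lower triangular matrix with entry t in position (2,1) and S has entry s in position (2,1), are isomorphic. Explicitly, X_1 ↦ Y_1, X_2 ↦ ((t−s)/2) Y_1 + Y_2 defines an isomorphism A(T) → A(S). -/
open scoped BigOperators

noncomputable section

variable {F : Type} [Field F]

/-!
In `A(S)` we have `Y₁² = 0` and `Y₂² = s Y₁ Y₂`, so `Z = c Y₁ + Y₂` satisfies `Y₁ Z = Y₁ Y₂` and
`Z² = (s + 2c) Y₁ Z`. For `c = (t - s)/2` the pair `(Y₁, Z)` therefore satisfies the relations of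
`A(T)` and defines a map `A(T) → A(S)`. The map `A(S) → A(T)` built the same way uses the
coefficient `(s - t)/2 = -c`, so the two are mutually inverse on generators.
-/

open MvPolynomial

section Presentation

variable {n : ℕ} (T : Matrix (Fin n) (Fin n) F)

def NTRelations {B : Type*} [CommRing B] [Algebra F B] (x : Fin n → B) : Prop :=
  ∀ i, x i ^ 2 = ∑ j ∈ Finset.univ.filter (fun j => j < i), algebraMap F B (T i j) * x j * x i

theorem ntRelations_ntGen : NTRelations T (ntGen T) := by
  intro i
  have hmem : X i ^ 2 - ∑ j ∈ Finset.univ.filter (fun j => j < i), C (T i j) * X j * X i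
      ∈ ntIdeal T :=
    Ideal.subset_span ⟨i, rfl⟩
  rw [← sub_eq_zero, ← (Ideal.Quotient.eq_zero_iff_mem).2 hmem]
  simp only [ntGen, map_sub, map_pow, map_sum, map_mul]
  rfl

variable {T} {B : Type*} [CommRing B] [Algebra F B]

def ntLift (x : Fin n → B) (hx : NTRelations T x) : NTAlg T →ₐ[F] B :=
  Ideal.Quotient.liftₐ _ (aeval x) fun p hp => by
    rw [ntIdeal, ← RingHom.mem_ker] at *
    refine Ideal.span_le.2 ?_ hp
    rintro _ ⟨i, rfl⟩
    simp [hx i]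

@[simp]
theorem ntLift_ntGen (x : Fin n → B) (hx : NTRelations T x) (i : Fin n) :
    ntLift x hx (ntGen T i) = x i :=
  aeval_X x i

theorem NTAlg.algHom_ext {f g : NTAlg T →ₐ[F] B} (h : ∀ i, f (ntGen T i) = g (ntGen T i)) :
    f = g :=
  Ideal.Quotient.algHom_ext F (MvPolynomial.algHom_ext h)

end Presentation

section TwoGenerators

variable {B : Type*} [CommRing B] [Algebra F B]

theorem ntRelations_two_iff (t : F) (x : Fin 2 → B) :
    NTRelations !![0, 0; t, 0] x ↔ x 0 ^ 2 = 0 ∧ x 1 ^ 2 = algebraMap F B t * x 0 * x 1 := by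
  have filter_zero : Finset.univ.filter (fun j => j < (0 : Fin 2)) = ∅ := by decide
  have filter_one : Finset.univ.filter (fun j => j < (1 : Fin 2)) = {0} := by decide
  simp only [NTRelations, Fin.forall_fin_two, filter_zero, filter_one, Finset.sum_empty,
    Finset.sum_singleton]
  simp

theorem sq_shear_eq {x y : B} (s c : F) (hx : x ^ 2 = 0)
    (hy : y ^ 2 = algebraMap F B s * x * y) :
    (c • x + y) ^ 2 = algebraMap F B (s + 2 * c) * x * (c • x + y) := by
  simp only [Algebra.smul_def, map_add, map_mul, map_ofNat]
  linear_combination (-algebraMap F B c ^ 2 - algebraMap F B s * algebraMap F B c) * hx + hy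

variable (h2 : (2 : F) ≠ 0)

def ntShear (t s : F) : NTAlg !![0, 0; t, 0] →ₐ[F] NTAlg !![0, 0; s, 0] :=
  ntLift ![ntGen _ 0, ((t - s) / 2) • ntGen _ 0 + ntGen _ 1] <| by
    obtain ⟨hx, hy⟩ := (ntRelations_two_iff s _).1 (ntRelations_ntGen _)
    refine (ntRelations_two_iff t _).2 ⟨hx, ?_⟩
    simpa [mul_div_cancel₀ _ h2] using sq_shear_eq s ((t - s) / 2) hx hy

@[simp]
theorem ntShear_ntGen_zero (t s : F) : ntShear h2 t s (ntGen _ 0) = ntGen _ 0 :=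
  ntLift_ntGen _ _ 0

@[simp]
theorem ntShear_ntGen_one (t s : F) :
    ntShear h2 t s (ntGen _ 1) = ((t - s) / 2) • ntGen _ 0 + ntGen _ 1 :=
  ntLift_ntGen _ _ 1

theorem ntShear_comp_ntShear (t s : F) :
    (ntShear h2 s t).comp (ntShear h2 t s) = AlgHom.id F _ := by
  refine NTAlg.algHom_ext fun i => ?_
  fin_cases i
  · simp
  · have hcancel : (t - s) / 2 + (s - t) / 2 = 0 := by ring
    simp [← add_assoc, ← add_smul, hcancel]

end TwoGenerators

/-- For any `t, s ∈ F`, the 2-generator algebras `A(T)` and `A(S)` are isomorphic via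
`X₁ ↦ Y₁`, `X₂ ↦ ((t − s)/2) Y₁ + Y₂`. -/
theorem stmt7 (h2 : (2 : F) ≠ 0) (t s : F) :
    ∃ e : NTAlg (!![0, 0; t, 0] : Matrix (Fin 2) (Fin 2) F) ≃ₐ[F]
          NTAlg (!![0, 0; s, 0] : Matrix (Fin 2) (Fin 2) F),
      e (ntGen !![0, 0; t, 0] 0) = ntGen !![0, 0; s, 0] 0 ∧
      e (ntGen !![0, 0; t, 0] 1) =
        ((t - s) / 2) • ntGen !![0, 0; s, 0] 0 + ntGen !![0, 0; s, 0] 1 := by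
  refine ⟨AlgEquiv.ofAlgHom (ntShear h2 t s) (ntShear h2 s t) (ntShear_comp_ntShear h2 s t)
    (ntShear_comp_ntShear h2 t s), ?_, ?_⟩ <;> simp
end
end
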